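/- Let Ω ⊂ ℝⁿ (n ≥ 2) be a uniformly C² domain, v ∈ bmo_∞^∞(Ω), v₁ = θ_ρ v, v₂ := v − v₁ (so supp v₂ ⊂ Ω \ Γ_ρ), and ρ < c_Ω^ε/32. Then the zero extension v₂^{ze} of v₂ to ℝⁿ belongs to bmo(ℝⁿ) and satisfies ‖v₂^{ze}‖_{bmo(ℝⁿ)} ≤ (C/ρⁿ) ‖v‖_{bmo_∞^∞(Ω)} with C independent of v and ρ. -/

import Mathlib

open MeasureTheory Metric Set Function
open scoped ENNReal Pointwise NNReal

noncomputable section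
attribute [local instance] Classical.propDecidable

/-- Euclidean space `ℝⁿ`. -/
abbrev Euc (n : ℕ) := EuclideanSpace ℝ (Fin n)

/-- Euclidean space `ℝ^{n-1}` of tangential coordinates `x'`. -/
abbrev Euc' (n : ℕ) := EuclideanSpace ℝ (Fin (n - 1))

/-- The model space `ℝ^{n-1} × ℝ` with the Euclidean (`L²`) norm. -/
abbrev Model (n : ℕ) := WithLp 2 (Euc' n × ℝ)

/-- Tangential component `p'` of a model point. -/
def mFst {n : ℕ} (p : Model n) : Euc' n := (WithLp.equiv 2 (Euc' n × ℝ) p).1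

/-- Vertical component `pₙ` of a model point. -/
def mSnd {n : ℕ} (p : Model n) : ℝ := (WithLp.equiv 2 (Euc' n × ℝ) p).2

/-- Build a model point from components. -/
def mMk {n : ℕ} (x' : Euc' n) (t : ℝ) : Model n := (WithLp.equiv 2 (Euc' n × ℝ)).symm (x', t)

/-- Signed distance to the boundary of `Ω` (positive inside `Ω`). -/
def sdist {n : ℕ} (Ω : Set (Euc n)) (x : Euc n) : ℝ :=
  if x ∈ Ω then infDist x (frontier Ω) else -infDist x (frontier Ω)

/-- The average of `f` over the closed ball `B_r(x)`. -/
def ballAvg {n : ℕ} (f : Euc n → ℝ) (x : Euc n) (r : ℝ) : ℝ := ⨍ y in closedBall x r, f y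

/-- The mean oscillation of `f` over the closed ball `B_r(x)`. -/
def meanOsc {n : ℕ} (f : Euc n → ℝ) (x : Euc n) (r : ℝ) : ℝ :=
  ⨍ y in closedBall x r, |f y - ballAvg f x r|

/-- All mean oscillations of `f` over closed balls `B_r(x) ⊆ U` with `r < μ`. -/
def oscSet {n : ℕ} (f : Euc n → ℝ) (U : Set (Euc n)) (μ : ℝ≥0∞) : Set ℝ :=
  {a | ∃ (x : Euc n) (r : ℝ), 0 < r ∧ ENNReal.ofReal r < μ ∧ closedBall x r ⊆ U ∧
        a = meanOsc f x r}

/-- The `BMO^μ(U)` seminorm. -/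
def bmoSemi {n : ℕ} (f : Euc n → ℝ) (U : Set (Euc n)) (μ : ℝ≥0∞) : ℝ := sSup (oscSet f U μ)

/-- `f ∈ BMO^μ(U)`. -/
def MemBMO {n : ℕ} (f : Euc n → ℝ) (U : Set (Euc n)) (μ : ℝ≥0∞) : Prop :=
  (∀ (x : Euc n) (r : ℝ), closedBall x r ⊆ U → IntegrableOn f (closedBall x r)) ∧
    BddAbove (oscSet f U μ)

/-- The family of integrals `∫_{B_1(x) ∩ D} |f|`. -/
def l1Set {n : ℕ} (f : Euc n → ℝ) (Dm : Set (Euc n)) : Set ℝ :=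
  range fun x : Euc n => ∫ y in closedBall x 1 ∩ Dm, |f y|

/-- The uniformly-local `L¹` norm `‖f‖_{L¹_ul(D)}`. -/
def l1ul {n : ℕ} (f : Euc n → ℝ) (Dm : Set (Euc n)) : ℝ := sSup (l1Set f Dm)

/-- `f ∈ L¹_ul(D)`. -/
def MemL1ul {n : ℕ} (f : Euc n → ℝ) (Dm : Set (Euc n)) : Prop :=
  (∀ x : Euc n, IntegrableOn f (closedBall x 1 ∩ Dm)) ∧ BddAbove (l1Set f Dm)

/-- The `bmo_∞^∞(U)` norm `[f]_{BMO^∞(U)} + ‖f‖_{L¹_ul(U)}`. -/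
def bmoNorm {n : ℕ} (f : Euc n → ℝ) (U : Set (Euc n)) : ℝ := bmoSemi f U ⊤ + l1ul f U

/-- `f ∈ bmo_∞^∞(U) = BMO^∞(U) ∩ L¹_ul(U)`. -/
def MemBmo {n : ℕ} (f : Euc n → ℝ) (U : Set (Euc n)) : Prop := MemBMO f U ⊤ ∧ MemL1ul f U

/-- Hölder quotients and values of `φ` on `U` (whose sup is the `C^γ(U)` norm). -/
def holderSet {n : ℕ} (γ : ℝ) (φ : Euc n → ℝ) (U : Set (Euc n)) : Set ℝ :=
  {a | ∃ x ∈ U, a = |φ x|} ∪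
    {a | ∃ x ∈ U, ∃ y ∈ U, x ≠ y ∧ a = |φ x - φ y| / dist x y ^ γ}

/-- The Hölder norm `‖φ‖_{C^γ(U)}`. -/
def holderNorm {n : ℕ} (γ : ℝ) (φ : Euc n → ℝ) (U : Set (Euc n)) : ℝ := sSup (holderSet γ φ U)

/-- `φ ∈ C^γ(U)`. -/
def MemHolderOn {n : ℕ} (γ : ℝ) (φ : Euc n → ℝ) (U : Set (Euc n)) : Prop :=
  BddAbove (holderSet γ φ U)

/-- The quantities `r^{-n} ∫_{B_r(x) ∩ dom} |f|`, for `x ∈ ∂Ω`, `0 < r < ν`. -/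
def bSet {n : ℕ} (Ω dom : Set (Euc n)) (f : Euc n → ℝ) (ν : ℝ≥0∞) : Set ℝ :=
  {a | ∃ x ∈ frontier Ω, ∃ r : ℝ, 0 < r ∧ ENNReal.ofReal r < ν ∧
        a = (∫ y in closedBall x r ∩ dom, |f y|) / r ^ n}

/-- The seminorm `[f]_{b^ν}` controlling boundary behaviour. -/
def bSemi {n : ℕ} (Ω dom : Set (Euc n)) (f : Euc n → ℝ) (ν : ℝ≥0∞) : ℝ := sSup (bSet Ω dom f ν)

/-- `[f]_{b^ν} < ∞` (together with the relevant local integrability). -/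
def MemB {n : ℕ} (Ω dom : Set (Euc n)) (f : Euc n → ℝ) (ν : ℝ≥0∞) : Prop :=
  (∀ (x : Euc n) (r : ℝ), IntegrableOn f (closedBall x r ∩ dom)) ∧ BddAbove (bSet Ω dom f ν)

/-- One-sided neighbourhood `Γ_δ = {x ∈ Ω : d(x) < δ}` of the boundary. -/
def innerNbhd {n : ℕ} (Ω : Set (Euc n)) (δ : ℝ) : Set (Euc n) := {x | x ∈ Ω ∧ sdist Ω x < δ}

/-- Two-sided neighbourhood `Γ^δ = {x : |d(x)| < δ}` of the boundary. -/
def tubNbhd {n : ℕ} (Ω : Set (Euc n)) (δ : ℝ) : Set (Euc n) := {x | |sdist Ω x| < δ}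

/-- The cylinder `V_ρ = B_ρ(0') × (-ρ, ρ)` in the model space. -/
def vSet (n : ℕ) (ρ : ℝ) : Set (Model n) := {p | ‖mFst p‖ < ρ ∧ |mSnd p| < ρ}

/-- A smooth cutoff `θ` with `θ = 1` on `[-1,1]`, `θ = 0` off `(-2,2)`, `0 ≤ θ ≤ 1`. -/
def IsCutoff (θ : ℝ → ℝ) : Prop :=
  ContDiff ℝ (⊤ : ℕ∞) θ ∧ HasCompactSupport θ ∧ (∀ t, 0 ≤ θ t ∧ θ t ≤ 1) ∧
    (∀ t, |t| ≤ 1 → θ t = 1) ∧ (∀ t, 2 ≤ |t| → θ t = 0)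

/-- Data witnessing that `Ω ⊆ ℝⁿ` is a uniformly `C²` domain of type `(r*, δ*, L_Γ)`,
together with a tubular neighbourhood of width `ρ₀` of the boundary on which the
nearest-point projection onto `∂Ω` is well defined and unique. -/
structure UnifC2Data (n : ℕ) (Ω : Set (Euc n)) where
  isOpen : IsOpen Ω
  conn : IsConnected Ω
  rStar : ℝ
  δStar : ℝ
  LΓ : ℝ
  rStar_pos : 0 < rStar
  δStar_pos : 0 < δStar
  LΓ_pos : 0 < LΓ
  /-- the rotation of the local graph chart at a boundary point -/
  rot : Euc n → Model n ≃ₗᵢ[ℝ] Euc n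
  /-- the local graph function `ψ_{w₀}` at a boundary point -/
  ψ : Euc n → Euc' n → ℝ
  ψ_zero : ∀ w ∈ frontier Ω, ψ w 0 = 0
  dψ_zero : ∀ w ∈ frontier Ω, fderiv ℝ (ψ w) 0 = 0
  ψ_C2 : ∀ w ∈ frontier Ω, ContDiffOn ℝ 2 (ψ w) (ball (0 : Euc' n) rStar)
  ψ_bdd : ∀ w ∈ frontier Ω, ∀ x' ∈ ball (0 : Euc' n) rStar,
    |ψ w x'| ≤ LΓ ∧ ‖fderiv ℝ (ψ w) x'‖ ≤ LΓ ∧ ‖fderiv ℝ (fderiv ℝ (ψ w)) x'‖ ≤ LΓ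
  mem_iff : ∀ w ∈ frontier Ω, ∀ p : Model n, ‖mFst p‖ < rStar →
    |mSnd p - ψ w (mFst p)| < δStar → (w + rot w p ∈ Ω ↔ ψ w (mFst p) < mSnd p)
  frontier_iff : ∀ w ∈ frontier Ω, ∀ p : Model n, ‖mFst p‖ < rStar →
    |mSnd p - ψ w (mFst p)| < δStar → (w + rot w p ∈ frontier Ω ↔ mSnd p = ψ w (mFst p))
  /-- a radius `ρ₀` smaller than `r*`, `δ*`, `1` and the reach of the boundary -/
  ρ₀ : ℝ
  ρ₀_pos : 0 < ρ₀
  ρ₀_lt : ρ₀ < min rStar (min δStar 1)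
  /-- the nearest-point projection `π` onto the boundary -/
  proj : Euc n → Euc n
  proj_mem : ∀ x : Euc n, |sdist Ω x| < ρ₀ → proj x ∈ frontier Ω
  proj_dist : ∀ x : Euc n, |sdist Ω x| < ρ₀ → dist x (proj x) = |sdist Ω x|
  proj_unique : ∀ x : Euc n, |sdist Ω x| < ρ₀ →
    ∀ y ∈ frontier Ω, dist x y = |sdist Ω x| → y = proj x

namespace UnifC2Data

variable {n : ℕ} {Ω : Set (Euc n)} (D : UnifC2Data n Ω)

/-- The graph neighbourhood `U_{r*,δ*,ψ_{w₀}}(w₀)`. -/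
def bigNbhd (w : Euc n) : Set (Euc n) :=
  {x | ∃ p : Model n, ‖mFst p‖ < D.rStar ∧ |mSnd p - D.ψ w (mFst p)| < D.δStar ∧
        x = w + D.rot w p}

/-- Chart coordinates of `x` in the chart centred at `w`. -/
def coords (w : Euc n) (x : Euc n) : Model n := (D.rot w).symm (x - w)

/-- The normal-coordinate neighbourhood `U_ρ(w₀)`. -/
def uNbhd (w : Euc n) (ρ : ℝ) : Set (Euc n) :=
  {x | x ∈ D.bigNbhd w ∧ ‖mFst (D.coords w (D.proj x))‖ < ρ ∧ |sdist Ω x| < ρ}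

/-- The boundary point over `x'` in the chart at `w`. -/
def bpt (w : Euc n) (x' : Euc' n) : Euc n := w + D.rot w (mMk x' (D.ψ w x'))

/-- The inward unit normal at the boundary point over `x'`, i.e. `∇d` there. -/
def inNormal (w : Euc n) (x' : Euc' n) : Euc n :=
  (Real.sqrt (1 + ‖gradient (D.ψ w) x'‖ ^ 2))⁻¹ •
    D.rot w (mMk (-(gradient (D.ψ w) x')) 1)

/-- The normal coordinate map `F(η) = (η', ψ(η')) + ηₙ ∇d(η', ψ(η'))`. -/
def nCoord (w : Euc n) (η : Model n) : Euc n :=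
  D.bpt w (mFst η) + mSnd η • D.inNormal w (mFst η)

/-- The normal coordinate map read in the chart coordinates at `w`. -/
def nCoordC (w : Euc n) (η : Model n) : Model n := D.coords w (D.nCoord w η)

/-- The inverse `F⁻¹` of the normal coordinate map, in chart coordinates. -/
def nCoordCInv (w : Euc n) : Model n → Model n :=
  haveI : Nonempty (Model n) := ⟨0⟩
  Function.invFun (D.nCoordC w)

/-- Reflection across the boundary: `x ↦ 2πx − x`. -/
def reflect (x : Euc n) : Euc n := (2 : ℝ) • D.proj x - x

/-- Even extension with respect to `Γ` of a function defined (essentially) on `Ω`. -/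
def evenExt (f : Euc n → ℝ) (x : Euc n) : ℝ :=
  if x ∈ closure Ω then f x else if |sdist Ω x| < D.ρ₀ then f (D.reflect x) else 0

/-- Even extension with respect to `Γ` of a vector field defined on `Ω`. -/
def evenExtV (u : Euc n → Euc n) (x : Euc n) : Euc n :=
  if x ∈ closure Ω then u x else if |sdist Ω x| < D.ρ₀ then u (D.reflect x) else 0

/-- Odd extension with respect to `Γ` of a vector field defined on `Ω`. -/
def oddExtV (u : Euc n → Euc n) (x : Euc n) : Euc n :=
  if x ∈ closure Ω then u x else if |sdist Ω x| < D.ρ₀ then -u (D.reflect x) else 0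

end UnifC2Data

/-- Vector-valued analogue: average over a ball. -/
def ballAvgV {n : ℕ} (u : Euc n → Euc n) (x : Euc n) (r : ℝ) : Euc n := ⨍ y in closedBall x r, u y

/-- Vector-valued mean oscillation. -/
def meanOscV {n : ℕ} (u : Euc n → Euc n) (x : Euc n) (r : ℝ) : ℝ :=
  ⨍ y in closedBall x r, ‖u y - ballAvgV u x r‖

/-- Vector-valued oscillation family. -/
def oscSetV {n : ℕ} (u : Euc n → Euc n) (U : Set (Euc n)) (μ : ℝ≥0∞) : Set ℝ :=
  {a | ∃ (x : Euc n) (r : ℝ), 0 < r ∧ ENNReal.ofReal r < μ ∧ closedBall x r ⊆ U ∧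
        a = meanOscV u x r}

/-- Vector-valued `BMO^μ` seminorm. -/
def bmoSemiV {n : ℕ} (u : Euc n → Euc n) (U : Set (Euc n)) (μ : ℝ≥0∞) : ℝ := sSup (oscSetV u U μ)

/-- Vector-valued `u ∈ BMO^μ(U)`. -/
def MemBMOV {n : ℕ} (u : Euc n → Euc n) (U : Set (Euc n)) (μ : ℝ≥0∞) : Prop :=
  (∀ (x : Euc n) (r : ℝ), closedBall x r ⊆ U → IntegrableOn u (closedBall x r)) ∧
    BddAbove (oscSetV u U μ)

/-- Vector-valued uniformly-local `L¹` family. -/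
def l1SetV {n : ℕ} (u : Euc n → Euc n) (Dm : Set (Euc n)) : Set ℝ :=
  range fun x : Euc n => ∫ y in closedBall x 1 ∩ Dm, ‖u y‖

/-- Vector-valued uniformly-local `L¹` norm. -/
def l1ulV {n : ℕ} (u : Euc n → Euc n) (Dm : Set (Euc n)) : ℝ := sSup (l1SetV u Dm)

/-- Vector-valued `u ∈ L¹_ul(D)`. -/
def MemL1ulV {n : ℕ} (u : Euc n → Euc n) (Dm : Set (Euc n)) : Prop :=
  (∀ x : Euc n, IntegrableOn u (closedBall x 1 ∩ Dm)) ∧ BddAbove (l1SetV u Dm)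

/-- Vector-valued `bmo` norm. -/
def bmoNormV {n : ℕ} (u : Euc n → Euc n) (U : Set (Euc n)) : ℝ := bmoSemiV u U ⊤ + l1ulV u U

/-- Vector-valued `u ∈ bmo(U)`. -/
def MemBmoV {n : ℕ} (u : Euc n → Euc n) (U : Set (Euc n)) : Prop :=
  MemBMOV u U ⊤ ∧ MemL1ulV u U

/-- `∇d`, the gradient of the signed distance. -/
def gradd {n : ℕ} (Ω : Set (Euc n)) (x : Euc n) : Euc n := gradient (sdist Ω) x

/-- Normal part `P u = (∇d ⋅ u) ∇d` of a vector field. -/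
def normalPart {n : ℕ} (Ω : Set (Euc n)) (u : Euc n → Euc n) (x : Euc n) : Euc n :=
  (inner ℝ (gradd Ω x) (u x) : ℝ) • gradd Ω x

/-- Tangential part `Q u = u − (∇d ⋅ u) ∇d` of a vector field. -/
def tangentPart {n : ℕ} (Ω : Set (Euc n)) (u : Euc n → Euc n) (x : Euc n) : Euc n :=
  u x - normalPart Ω u x

/-- `u ∈ vbmo(Ω)`. -/
def MemVbmo {n : ℕ} (Ω : Set (Euc n)) (u : Euc n → Euc n) : Prop :=
  MemBmoV u Ω ∧ MemB Ω Ω (fun x => (inner ℝ (gradd Ω x) (u x) : ℝ)) ⊤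

/-- The `vbmo(Ω)` norm. -/
def vbmoNorm {n : ℕ} (Ω : Set (Euc n)) (u : Euc n → Euc n) : ℝ :=
  bmoNormV u Ω + bSemi Ω Ω (fun x => (inner ℝ (gradd Ω x) (u x) : ℝ)) ⊤

/-- A bounded Lipschitz domain with Lipschitz constant `L`. -/
def IsLipschitzDomain {n : ℕ} (L : ℝ) (Wd : Set (Euc n)) : Prop :=
  IsOpen Wd ∧ Bornology.IsBounded Wd ∧
    ∃ r : ℝ, 0 < r ∧ ∀ z ∈ frontier Wd,
      ∃ (A : Model n ≃ₗᵢ[ℝ] Euc n) (h : Euc' n → ℝ),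
        LipschitzWith (Real.toNNReal L) h ∧ h 0 = 0 ∧
          ∀ p : Model n, ‖p‖ < r →
            ((z + A p ∈ Wd ↔ h (mFst p) < mSnd p) ∧
              (z + A p ∈ frontier Wd ↔ mSnd p = h (mFst p)))

/-- A (uniformly) `C²` domain of type `(α, β, L)` inside the model space. -/
def IsUnifC2Model {n : ℕ} (α β L : ℝ) (W : Set (Model n)) : Prop :=
  IsOpen W ∧ ∀ z ∈ frontier W,
    ∃ (A : Model n ≃ₗᵢ[ℝ] Model n) (h : Euc' n → ℝ),
      h 0 = 0 ∧ fderiv ℝ h 0 = 0 ∧ ContDiffOn ℝ 2 h (ball (0 : Euc' n) α) ∧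
        (∀ x' ∈ ball (0 : Euc' n) α,
          |h x'| ≤ L ∧ ‖fderiv ℝ h x'‖ ≤ L ∧ ‖fderiv ℝ (fderiv ℝ h) x'‖ ≤ L) ∧
        ∀ p : Model n, ‖mFst p‖ < α → |mSnd p - h (mFst p)| < β →
          ((z + A p ∈ W ↔ h (mFst p) < mSnd p) ∧
            (z + A p ∈ frontier W ↔ mSnd p = h (mFst p)))

/-!
Write `f` for the zero extension of `(1 - θ_ρ) v`. On a ball `B_r(x)` with `r ≤ ρ/4`, either
`B_{ρ/4}(x)` leaves `Ω`, and then every point of `B_r(x) ∩ Ω` is within `ρ` of `Γ`, so `f`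
vanishes on the ball; or `B_{ρ/4}(x) ⊆ Ω`, and then `f = φ v` with `|φ| ≤ 1` and `φ` Lipschitz
with constant `‖θ'‖_∞ / ρ`, so the oscillation of `f` is at most that of `v` plus
`(r/ρ) |v_{B_r}|`. A dyadic chain of balls from radius `ρ/4` down to `r` gives
`r |v_{B_r}| ≲ ρ [v]_{BMO} + ρ^{1-n} ‖v‖_{L¹_ul}`. On balls with `r > ρ/4` the oscillation is at
most twice the mean of `|f|`, and by Fubini
`∫_{B_r} |f| ≤ (r + 1)ⁿ ‖v‖_{L¹_ul} ≤ (5r/ρ)ⁿ ‖v‖_{L¹_ul}`.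
-/

section SetAverage

variable {α : Type*} [MeasurableSpace α] {μ : Measure α} {s : Set α}

theorem abs_setAverage_le (g : α → ℝ) : |⨍ x in s, g x ∂μ| ≤ ⨍ x in s, |g x| ∂μ := by
  simp only [setAverage_eq, smul_eq_mul, abs_mul, abs_inv, abs_of_nonneg measureReal_nonneg]
  gcongr
  exact abs_integral_le_integral_abs

theorem setAverage_mono_on (hs : MeasurableSet s) {g h : α → ℝ} (hg : IntegrableOn g s μ)
    (hh : IntegrableOn h s μ) (hgh : ∀ x ∈ s, g x ≤ h x) :
    ⨍ x in s, g x ∂μ ≤ ⨍ x in s, h x ∂μ := by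
  simp only [setAverage_eq, smul_eq_mul]
  exact mul_le_mul_of_nonneg_left (setIntegral_mono_on hg hh hs hgh) (by positivity)

theorem setAverage_add_const (hs₀ : μ s ≠ 0) (hs : μ s ≠ ∞) {g : α → ℝ}
    (hg : IntegrableOn g s μ) (c : ℝ) : ⨍ x in s, (g x + c) ∂μ = ⨍ x in s, g x ∂μ + c := by
  have hc : IntegrableOn (fun _ => c) s μ := integrableOn_const hs
  rw [setAverage_eq, integral_add hg hc, smul_add, ← setAverage_eq, ← setAverage_eq,
    setAverage_const hs₀ hs]

end SetAverage

def unitBallVol (n : ℕ) : ℝ := volume.real (closedBall (0 : Euc n) 1)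

section BallAverage

variable {n : ℕ}

theorem unitBallVol_pos : 0 < unitBallVol n :=
  ENNReal.toReal_pos (measure_closedBall_pos _ _ one_pos).ne' measure_closedBall_lt_top.ne

theorem volume_real_closedBall (x : Euc n) {r : ℝ} (hr : 0 ≤ r) :
    volume.real (closedBall x r) = r ^ n * unitBallVol n := by
  rw [unitBallVol, Measure.addHaar_real_closedBall' volume x hr, finrank_euclideanSpace_fin]

theorem meanOsc_nonneg (g : Euc n → ℝ) (x : Euc n) (r : ℝ) : 0 ≤ meanOsc g x r := by
  rw [meanOsc, setAverage_eq']
  exact integral_nonneg fun _ => abs_nonneg _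

theorem meanOsc_eq_zero_of_eqOn_zero {g : Euc n → ℝ} {x : Euc n} {r : ℝ}
    (hg : EqOn g 0 (closedBall x r)) : meanOsc g x r = 0 := by
  have hA : ballAvg g x r = 0 := by
    rw [ballAvg, setAverage_congr_fun measurableSet_closedBall (.of_forall hg)]
    simp
  rw [meanOsc, setAverage_congr_fun measurableSet_closedBall
    (g := fun _ => (0 : ℝ)) (.of_forall fun y hy => by simp [hg hy, hA])]
  simp

variable {g : Euc n → ℝ} {x : Euc n} {r : ℝ}

theorem abs_ballAvg_sub_le (hr : 0 < r) (hg : IntegrableOn g (closedBall x r)) (c : ℝ) :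
    |ballAvg g x r - c| ≤ ⨍ y in closedBall x r, |g y - c| := by
  have h := setAverage_add_const (measure_closedBall_pos _ _ hr).ne'
    measure_closedBall_lt_top.ne hg (-c)
  simp only [← sub_eq_add_neg] at h
  rw [ballAvg, ← h]
  exact abs_setAverage_le _

theorem meanOsc_le_two_mul (hr : 0 < r) (hg : IntegrableOn g (closedBall x r)) (c : ℝ) :
    meanOsc g x r ≤ 2 * ⨍ y in closedBall x r, |g y - c| := by
  have hμ := (measure_closedBall_pos volume x hr).ne'
  have hμ' : volume (closedBall x r) ≠ ∞ := measure_closedBall_lt_top.ne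
  have hgc : IntegrableOn (fun y => |g y - c|) (closedBall x r) :=
    (hg.sub (integrableOn_const hμ')).abs
  calc meanOsc g x r
      ≤ ⨍ y in closedBall x r, (|g y - c| + |ballAvg g x r - c|) := by
        refine setAverage_mono_on measurableSet_closedBall
          (hg.sub (integrableOn_const hμ')).abs (hgc.add (integrableOn_const hμ')) fun y _ => ?_
        simpa [abs_sub_comm c] using abs_sub_le (g y) c (ballAvg g x r)
    _ = (⨍ y in closedBall x r, |g y - c|) + |ballAvg g x r - c| :=
        setAverage_add_const hμ hμ' hgc _
    _ ≤ 2 * ⨍ y in closedBall x r, |g y - c| := by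
        linarith [abs_ballAvg_sub_le hr hg c]

end BallAverage

section Dyadic

variable {n : ℕ} {g : Euc n → ℝ} {x : Euc n}

theorem setAverage_closedBall_le_of_le {G : Euc n → ℝ} (hG : ∀ y, 0 ≤ G y) {s t : ℝ}
    (hs : 0 < s) (hst : s ≤ t) (hint : IntegrableOn G (closedBall x t)) :
    ⨍ y in closedBall x s, G y ≤ (t / s) ^ n * ⨍ y in closedBall x t, G y := by
  have hκ := unitBallVol_pos (n := n)
  have ht := hs.trans_le hst
  have hI : ∫ y in closedBall x s, G y ≤ ∫ y in closedBall x t, G y :=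
    setIntegral_mono_set hint (.of_forall hG) (closedBall_subset_closedBall hst).eventuallyLE
  simp only [setAverage_eq, smul_eq_mul, volume_real_closedBall x hs.le,
    volume_real_closedBall x ht.le]
  calc (s ^ n * unitBallVol n)⁻¹ * ∫ y in closedBall x s, G y
      ≤ (s ^ n * unitBallVol n)⁻¹ * ∫ y in closedBall x t, G y := by gcongr
    _ = (t / s) ^ n * ((t ^ n * unitBallVol n)⁻¹ * ∫ y in closedBall x t, G y) := by
        rw [div_pow]
        field_simp

theorem abs_ballAvg_sub_ballAvg_le {s t : ℝ} (hs : 0 < s) (hst : s ≤ t)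
    (hint : IntegrableOn g (closedBall x t)) :
    |ballAvg g x s - ballAvg g x t| ≤ (t / s) ^ n * meanOsc g x t :=
  (abs_ballAvg_sub_le hs (hint.mono_set (closedBall_subset_closedBall hst)) _).trans <|
    setAverage_closedBall_le_of_le (fun _ => abs_nonneg _) hs hst
      (hint.sub (integrableOn_const measure_closedBall_lt_top.ne)).abs

theorem abs_ballAvg_sub_ballAvg_le_two_pow {s t S : ℝ} (hs : 0 < s) (hst : s ≤ t)
    (hts : t ≤ 2 * s) (hint : IntegrableOn g (closedBall x t)) (hS : meanOsc g x t ≤ S) :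
    |ballAvg g x s - ballAvg g x t| ≤ 2 ^ n * S := by
  refine (abs_ballAvg_sub_ballAvg_le hs hst hint).trans ?_
  have hts' : t / s ≤ 2 := (div_le_iff₀ hs).2 (by linarith)
  exact mul_le_mul (pow_le_pow_left₀ (div_nonneg (by linarith) hs.le) hts' n) hS
    (meanOsc_nonneg g x t) (by positivity)

/-- Induction on the number of halvings from `R` down to `r`: passing from `2r` to `r` costs
`r 2ⁿ S ≤ 2ⁿ R S / 2` and halves the weight of the error already accumulated at `2r`. -/
theorem mul_abs_ballAvg_sub_ballAvg_le {r R S : ℝ} (hg : IntegrableOn g (closedBall x R))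
    (hosc : ∀ t, 0 < t → t ≤ R → meanOsc g x t ≤ S) (hr : 0 < r) (hrR : r ≤ R) :
    r * |ballAvg g x r - ballAvg g x R| ≤ 2 ^ n * R * S := by
  have hS : 0 ≤ S := (meanOsc_nonneg g x R).trans (hosc R (hr.trans_le hrR) le_rfl)
  have hjump : ∀ t, 0 < t → 2 * t ≤ R → |ballAvg g x t - ballAvg g x (2 * t)| ≤ 2 ^ n * S :=
    fun t ht htR => abs_ballAvg_sub_ballAvg_le_two_pow ht (by linarith) le_rfl
      (hg.mono_set (closedBall_subset_closedBall htR)) (hosc _ (by linarith) htR)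
  suffices key : ∀ k : ℕ, ∀ r, 0 < r → r ≤ R → R < 2 ^ k * r →
      r * |ballAvg g x r - ballAvg g x R| ≤ 2 ^ n * R * S by
    obtain ⟨k, hk⟩ := pow_unbounded_of_one_lt (R / r) one_lt_two
    exact key k r hr hrR ((div_lt_iff₀ hr).1 hk)
  intro k
  induction k with
  | zero => intro r _ hrR hk; simp at hk; linarith
  | succ k ih =>
    intro r hr hrR hk
    rcases lt_or_ge R (2 * r) with hR | hR
    · have h := abs_ballAvg_sub_ballAvg_le_two_pow hr hrR hR.le hg (hosc R (by linarith) le_rfl)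
      calc r * |ballAvg g x r - ballAvg g x R| ≤ R * (2 ^ n * S) :=
            mul_le_mul hrR h (abs_nonneg _) (by linarith)
        _ = 2 ^ n * R * S := by ring
    · have h2r := ih (2 * r) (by linarith) hR (by rw [pow_succ] at hk; linarith)
      have htri := abs_sub_le (ballAvg g x r) (ballAvg g x (2 * r)) (ballAvg g x R)
      have h1 := mul_le_mul_of_nonneg_left (hjump r hr hR) hr.le
      have h2 : r * (2 ^ n * S) ≤ (R / 2) * (2 ^ n * S) :=
        mul_le_mul_of_nonneg_right (by linarith) (by positivity)
      nlinarith

theorem mul_abs_ballAvg_le {r R S : ℝ} (hg : IntegrableOn g (closedBall x R))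
    (hosc : ∀ t, 0 < t → t ≤ R → meanOsc g x t ≤ S) (hr : 0 < r) (hrR : r ≤ R) :
    r * |ballAvg g x r| ≤ 2 ^ n * R * S + R * |ballAvg g x R| := by
  have h := mul_abs_ballAvg_sub_ballAvg_le hg hosc hr hrR
  have htri : |ballAvg g x r| ≤ |ballAvg g x r - ballAvg g x R| + |ballAvg g x R| := by
    simpa using abs_add_le (ballAvg g x r - ballAvg g x R) (ballAvg g x R)
  nlinarith [abs_nonneg (ballAvg g x R)]

end Dyadic

section Multiplier

variable {n : ℕ} {x : Euc n} {r : ℝ}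

theorem abs_ballAvg_le_integral_div {g : Euc n → ℝ} (hr : 0 < r) :
    |ballAvg g x r| ≤ (∫ y in closedBall x r, |g y|) / (r ^ n * unitBallVol n) := by
  calc |ballAvg g x r| ≤ ⨍ y in closedBall x r, |g y| := abs_setAverage_le g
    _ = _ := by rw [setAverage_eq, smul_eq_mul, volume_real_closedBall x hr.le, inv_mul_eq_div]

/-- Compare `φ v` with the constant `φ(x) ⨍ v`. -/
theorem meanOsc_le_of_eqOn_mul {f φ v : Euc n → ℝ} {K : ℝ} (hr : 0 < r)
    (hf : IntegrableOn f (closedBall x r)) (hv : IntegrableOn v (closedBall x r))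
    (hfφ : EqOn f (φ * v) (closedBall x r)) (hφ : ∀ y ∈ closedBall x r, |φ y| ≤ 1)
    (hφx : ∀ y ∈ closedBall x r, |φ y - φ x| ≤ K) :
    meanOsc f x r ≤ 2 * (meanOsc v x r + K * |ballAvg v x r|) := by
  set A := ballAvg v x r
  have hμ := (measure_closedBall_pos volume x hr).ne'
  have hμ' : volume (closedBall x r) ≠ ∞ := measure_closedBall_lt_top.ne
  have hvA : IntegrableOn (fun y => |v y - A|) (closedBall x r) :=
    (hv.sub (integrableOn_const hμ')).abs
  have hpt : ∀ y ∈ closedBall x r, |f y - φ x * A| ≤ |v y - A| + K * |A| := by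
    intro y hy
    rw [hfφ hy, Pi.mul_apply,
      show φ y * v y - φ x * A = φ y * (v y - A) + (φ y - φ x) * A by ring]
    refine (abs_add_le _ _).trans (add_le_add ?_ ?_) <;> rw [abs_mul]
    · exact mul_le_of_le_one_left (abs_nonneg _) (hφ y hy)
    · exact mul_le_mul_of_nonneg_right (hφx y hy) (abs_nonneg _)
  calc meanOsc f x r ≤ 2 * ⨍ y in closedBall x r, |f y - φ x * A| :=
        meanOsc_le_two_mul hr hf _
    _ ≤ 2 * ⨍ y in closedBall x r, (|v y - A| + K * |A|) := by
        gcongr 2 * ?_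
        exact setAverage_mono_on measurableSet_closedBall
          (hf.sub (integrableOn_const hμ')).abs (hvA.add (integrableOn_const hμ')) hpt
    _ = 2 * (meanOsc v x r + K * |A|) := by
        rw [setAverage_add_const hμ hμ' hvA, meanOsc]

end Multiplier

/-- Averaging the unit-ball integrals over the centres `z ∈ B_{r+1}(x)` counts every point
of `B_r(x)` with weight `μ (B₁(0))` (Fubini). -/
theorem unitBall_mul_lintegral_closedBall_le {E : Type*} [NormedAddCommGroup E]
    [ProperSpace E] [MeasurableSpace E] [BorelSpace E]
    (μ : Measure E) [μ.IsAddHaarMeasure] {g : E → ℝ≥0∞} (hg : AEMeasurable g μ) {M : ℝ≥0∞}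
    (hM : ∀ z, ∫⁻ y in closedBall z 1, g y ∂μ ≤ M) (x : E) (r : ℝ) :
    μ (closedBall 0 1) * ∫⁻ y in closedBall x r, g y ∂μ ≤ M * μ (closedBall x (r + 1)) := by
  have hT : MeasurableSet {p : E × E | dist p.1 p.2 ≤ 1} :=
    (isClosed_le continuous_dist continuous_const).measurableSet
  have hmeas : AEMeasurable (uncurry fun y z => (closedBall y 1).indicator (fun _ => g y) z)
      ((μ.restrict (closedBall x r)).prod μ) := by
    have e : (uncurry fun y z => (closedBall y 1).indicator (fun _ => g y) z) =
        {p : E × E | dist p.1 p.2 ≤ 1}.indicator (fun p => g p.1) := by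
      ext ⟨y, z⟩
      simp [indicator_apply, dist_comm]
    rw [e]
    exact hg.restrict.comp_fst.indicator hT
  have hinner : ∀ z, ∫⁻ y in closedBall x r, (closedBall y 1).indicator (fun _ => g y) z ∂μ
      ≤ (closedBall x (r + 1)).indicator (fun _ => M) z := by
    intro z
    have e : ∀ y, (closedBall y 1).indicator (fun _ => g y) z = (closedBall z 1).indicator g y :=
      fun y => by simp [indicator_apply, dist_comm]
    simp_rw [e]
    rw [lintegral_indicator measurableSet_closedBall, Measure.restrict_restrict
      measurableSet_closedBall]
    by_cases hz : z ∈ closedBall x (r + 1)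
    · rw [indicator_of_mem hz]
      exact (lintegral_mono_set inter_subset_left).trans (hM z)
    · have hempty : closedBall z 1 ∩ closedBall x r = ∅ := by
        refine eq_empty_of_forall_notMem fun y ⟨hzy, hxy⟩ => hz ?_
        rw [mem_closedBall] at *
        linarith [dist_triangle z y x, dist_comm z y]
      rw [indicator_of_notMem hz, hempty, Measure.restrict_empty, lintegral_zero_measure]
  calc μ (closedBall 0 1) * ∫⁻ y in closedBall x r, g y ∂μ
      = ∫⁻ y in closedBall x r, ∫⁻ z, (closedBall y 1).indicator (fun _ => g y) z ∂μ ∂μ := by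
        rw [mul_comm, ← lintegral_mul_const'' _ hg.restrict]
        refine setLIntegral_congr_fun measurableSet_closedBall fun y _ => ?_
        rw [lintegral_indicator_const measurableSet_closedBall,
          Measure.addHaar_closedBall_center μ y]
    _ = ∫⁻ z, ∫⁻ y in closedBall x r, (closedBall y 1).indicator (fun _ => g y) z ∂μ ∂μ :=
        lintegral_lintegral_swap hmeas
    _ ≤ ∫⁻ z, (closedBall x (r + 1)).indicator (fun _ => M) z ∂μ := lintegral_mono hinner
    _ = M * μ (closedBall x (r + 1)) := lintegral_indicator_const measurableSet_closedBall M

theorem MeasureTheory.LocallyIntegrable.of_forall_integrableOn_closedBall {E F : Type*}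
    [PseudoMetricSpace E] [MeasurableSpace E] [NormedAddCommGroup F] {μ : Measure E} {f : E → F}
    (hf : ∀ z, IntegrableOn f (closedBall z 1) μ) : LocallyIntegrable f μ :=
  fun z => ⟨closedBall z 1, closedBall_mem_nhds z one_pos, hf z⟩

theorem integral_abs_closedBall_le {n : ℕ} {f : Euc n → ℝ}
    (hf : ∀ z, IntegrableOn f (closedBall z 1)) {M : ℝ}
    (hM : ∀ z, ∫ y in closedBall z 1, |f y| ≤ M) (x : Euc n) {r : ℝ} (hr : 0 ≤ r) :
    ∫ y in closedBall x r, |f y| ≤ (r + 1) ^ n * M := by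
  have hloc := LocallyIntegrable.of_forall_integrableOn_closedBall hf
  have hM0 : 0 ≤ M := (integral_nonneg fun _ => abs_nonneg _).trans (hM x)
  have henorm : ∀ z s, IntegrableOn f (closedBall z s) →
      ∫⁻ y in closedBall z s, ‖f y‖ₑ = ENNReal.ofReal (∫ y in closedBall z s, |f y|) :=
    fun z s h => (ofReal_integral_norm_eq_lintegral_enorm h).symm
  have h := unitBall_mul_lintegral_closedBall_le volume hloc.aestronglyMeasurable.enorm
    (M := ENNReal.ofReal M) (fun z => henorm z 1 (hf z) ▸ ENNReal.ofReal_le_ofReal (hM z)) x r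
  rw [henorm x r (hloc.integrableOn_isCompact (isCompact_closedBall x r)),
    Measure.addHaar_closedBall' volume x (by linarith), finrank_euclideanSpace_fin,
    mul_comm, ← mul_assoc, ← ENNReal.ofReal_mul hM0,
    ENNReal.mul_le_mul_iff_left (measure_closedBall_pos _ _ one_pos).ne'
      measure_closedBall_lt_top.ne, mul_comm M] at h
  exact (ENNReal.ofReal_le_ofReal_iff (by positivity)).1 h

section BmoNorm

variable {n : ℕ} {f : Euc n → ℝ}

theorem bmoSemi_nonneg (f : Euc n → ℝ) (U : Set (Euc n)) (μ : ℝ≥0∞) : 0 ≤ bmoSemi f U μ :=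
  Real.sSup_nonneg <| by rintro a ⟨x, r, -, -, -, rfl⟩; exact meanOsc_nonneg f x r

theorem MemBMO.meanOsc_le_bmoSemi {U : Set (Euc n)} (hf : MemBMO f U ⊤) {x : Euc n} {r : ℝ}
    (hr : 0 < r) (hsub : closedBall x r ⊆ U) : meanOsc f x r ≤ bmoSemi f U ⊤ :=
  le_csSup hf.2 ⟨x, r, hr, ENNReal.ofReal_lt_top, hsub, rfl⟩

theorem l1ul_nonneg (f : Euc n → ℝ) (Dm : Set (Euc n)) : 0 ≤ l1ul f Dm :=
  Real.sSup_nonneg <| by rintro a ⟨z, rfl⟩; exact integral_nonneg fun _ => abs_nonneg _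

theorem bmoNorm_nonneg (f : Euc n → ℝ) (U : Set (Euc n)) : 0 ≤ bmoNorm f U :=
  add_nonneg (bmoSemi_nonneg f U ⊤) (l1ul_nonneg f U)

theorem MemL1ul.integral_le_l1ul {Dm : Set (Euc n)} (hf : MemL1ul f Dm) (z : Euc n) :
    ∫ y in closedBall z 1 ∩ Dm, |f y| ≤ l1ul f Dm :=
  le_csSup hf.2 ⟨z, rfl⟩

theorem memBmo_univ_and_bmoNorm_le {K M : ℝ} (hf : ∀ z, IntegrableOn f (closedBall z 1))
    (hosc : ∀ x r, 0 < r → meanOsc f x r ≤ K) (hM : ∀ z, ∫ y in closedBall z 1, |f y| ≤ M) :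
    MemBmo f univ ∧ bmoNorm f univ ≤ K + M := by
  have hloc := LocallyIntegrable.of_forall_integrableOn_closedBall hf
  have hoscSet : ∀ a ∈ oscSet f univ ⊤, a ≤ K := by
    rintro a ⟨x, r, hr, -, -, rfl⟩
    exact hosc x r hr
  have hl1Set : ∀ a ∈ l1Set f univ, a ≤ M := by
    rintro a ⟨z, rfl⟩
    simpa only [inter_univ] using hM z
  have hK : 0 ≤ K := (meanOsc_nonneg f 0 1).trans (hosc 0 1 one_pos)
  have hM0 : 0 ≤ M := (integral_nonneg fun _ => abs_nonneg _).trans (hM 0)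
  refine ⟨⟨⟨fun x r _ => hloc.integrableOn_isCompact (isCompact_closedBall x r), K, hoscSet⟩,
    fun z => by simpa only [inter_univ] using hf z, M, hl1Set⟩, ?_⟩
  exact add_le_add (Real.sSup_le hoscSet hK) (Real.sSup_le hl1Set hM0)

end BmoNorm

theorem infDist_frontier_le_dist {E : Type*} [NormedAddCommGroup E] [NormedSpace ℝ E]
    [FiniteDimensional ℝ E] {s : Set E} {z y : E} (hz : z ∈ s) (hy : y ∉ s) :
    infDist z (frontier s) ≤ dist z y := by
  obtain ⟨w, hw, hzw⟩ :=
    exists_mem_frontier_infDist_compl_eq_dist hz ((ne_univ_iff_exists_notMem s).2 ⟨y, hy⟩)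
  calc infDist z (frontier s) ≤ dist z w := infDist_le_dist_of_mem hw
    _ = infDist z sᶜ := hzw.symm
    _ ≤ dist z y := infDist_le_dist_of_mem hy

namespace IsCutoff

variable {θ : ℝ → ℝ}

theorem exists_lipschitzWith (hθ : IsCutoff θ) : ∃ L, LipschitzWith L θ :=
  ContDiff.lipschitzWith_of_hasCompactSupport hθ.2.1 hθ.1 (by simp)

theorem abs_one_sub_le (hθ : IsCutoff θ) (t : ℝ) : |1 - θ t| ≤ 1 :=
  abs_le.2 ⟨by linarith [(hθ.2.2.1 t).2], by linarith [(hθ.2.2.1 t).1]⟩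

theorem one_sub_eq_zero (hθ : IsCutoff θ) {t : ℝ} (ht : |t| ≤ 1) : 1 - θ t = 0 := by
  rw [hθ.2.2.2.1 t ht, sub_self]

end IsCutoff

/-- `v₂^{ze}` for `v₂ = (1 - θ_ρ) v`; on `Ω` the signed distance is `infDist · (frontier Ω)`. -/
def cutoffZeroExt {n : ℕ} (Ω : Set (Euc n)) (θ : ℝ → ℝ) (ρ : ℝ) (v : Euc n → ℝ) :
    Euc n → ℝ :=
  Ω.indicator fun x => (1 - θ (infDist x (frontier Ω) / ρ)) * v x

section CutoffZeroExt

variable {n : ℕ} {Ω : Set (Euc n)} {θ : ℝ → ℝ} {ρ : ℝ} {v : Euc n → ℝ}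

theorem cutoffZeroExt_eq_ite (Ω : Set (Euc n)) (θ : ℝ → ℝ) (ρ : ℝ) (v : Euc n → ℝ) :
    cutoffZeroExt Ω θ ρ v = fun x => if x ∈ Ω then (1 - θ (sdist Ω x / ρ)) * v x else 0 := by
  ext x
  by_cases hx : x ∈ Ω <;> simp [cutoffZeroExt, sdist, hx]

theorem abs_cutoffZeroExt_le (hθ : IsCutoff θ) (y : Euc n) :
    |cutoffZeroExt Ω θ ρ v y| ≤ Ω.indicator (fun y => |v y|) y := by
  by_cases hy : y ∈ Ω
  · rw [cutoffZeroExt, indicator_of_mem hy, indicator_of_mem hy, abs_mul]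
    exact mul_le_of_le_one_left (abs_nonneg _) (hθ.abs_one_sub_le _)
  · simp [cutoffZeroExt, hy]

theorem cutoffZeroExt_eq_zero_of_infDist_le (hθ : IsCutoff θ) (hρ : 0 < ρ) {y : Euc n}
    (hy : infDist y (frontier Ω) ≤ ρ) : cutoffZeroExt Ω θ ρ v y = 0 := by
  have ht : |infDist y (frontier Ω) / ρ| ≤ 1 := by
    rw [abs_of_nonneg (div_nonneg infDist_nonneg hρ.le)]
    exact div_le_one_of_le₀ hy hρ.le
  simp only [cutoffZeroExt, indicator_apply, hθ.one_sub_eq_zero ht, zero_mul, ite_self]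

theorem integrableOn_cutoffZeroExt (hθ : IsCutoff θ) (hΩ : MeasurableSet Ω)
    (hv : MemL1ul v Ω) (z : Euc n) : IntegrableOn (cutoffZeroExt Ω θ ρ v) (closedBall z 1) := by
  rw [cutoffZeroExt, integrableOn_indicator_iff hΩ, inter_comm]
  have hcont : Continuous fun x => 1 - θ (infDist x (frontier Ω) / ρ) :=
    continuous_const.sub (hθ.1.continuous.comp ((continuous_infDist_pt _).div_const ρ))
  exact (hv.1 z).bdd_mul hcont.aestronglyMeasurable
    (.of_forall fun x => hθ.abs_one_sub_le _)

theorem locallyIntegrable_cutoffZeroExt (hθ : IsCutoff θ) (hΩ : MeasurableSet Ω)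
    (hv : MemL1ul v Ω) : LocallyIntegrable (cutoffZeroExt Ω θ ρ v) :=
  .of_forall_integrableOn_closedBall (integrableOn_cutoffZeroExt hθ hΩ hv)

theorem integral_abs_cutoffZeroExt_le (hθ : IsCutoff θ) (hΩ : MeasurableSet Ω)
    (hv : MemL1ul v Ω) (z : Euc n) :
    ∫ y in closedBall z 1, |cutoffZeroExt Ω θ ρ v y| ≤ l1ul v Ω :=
  calc ∫ y in closedBall z 1, |cutoffZeroExt Ω θ ρ v y|
      ≤ ∫ y in closedBall z 1, Ω.indicator (fun y => |v y|) y :=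
        setIntegral_mono_on (integrableOn_cutoffZeroExt hθ hΩ hv z).abs
          (((integrableOn_indicator_iff hΩ).2 (by rw [inter_comm]; exact (hv.1 z).abs)))
          measurableSet_closedBall fun y _ => abs_cutoffZeroExt_le hθ y
    _ = ∫ y in closedBall z 1 ∩ Ω, |v y| := setIntegral_indicator hΩ
    _ ≤ l1ul v Ω := hv.integral_le_l1ul z

end CutoffZeroExt

section Oscillation

variable {n : ℕ} {Ω : Set (Euc n)} {θ : ℝ → ℝ} {ρ : ℝ} {v : Euc n → ℝ} {x : Euc n} {r : ℝ}

theorem abs_cutoff_sub_le {L : ℝ≥0} (hL : LipschitzWith L θ) (hρ : 0 < ρ) (y : Euc n) :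
    |(1 - θ (infDist y (frontier Ω) / ρ)) - (1 - θ (infDist x (frontier Ω) / ρ))|
      ≤ L / ρ * dist y x := by
  have hd := (lipschitz_infDist_pt (frontier Ω)).dist_le_mul y x
  rw [NNReal.coe_one, one_mul, Real.dist_eq] at hd
  calc |(1 - θ (infDist y (frontier Ω) / ρ)) - (1 - θ (infDist x (frontier Ω) / ρ))|
      = dist (θ (infDist x (frontier Ω) / ρ)) (θ (infDist y (frontier Ω) / ρ)) := by
        rw [Real.dist_eq, sub_sub_sub_cancel_left]
    _ ≤ L * dist (infDist x (frontier Ω) / ρ) (infDist y (frontier Ω) / ρ) := hL.dist_le_mul _ _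
    _ = L / ρ * |infDist y (frontier Ω) - infDist x (frontier Ω)| := by
        rw [Real.dist_eq, ← sub_div, abs_div, abs_of_pos hρ, abs_sub_comm]; ring
    _ ≤ L / ρ * dist y x := by gcongr

theorem meanOsc_cutoffZeroExt_le_of_closedBall_subset (hθ : IsCutoff θ) {L : ℝ≥0}
    (hL : LipschitzWith L θ) (hΩ : MeasurableSet Ω) (hv : MemBmo v Ω) (hρ : 0 < ρ)
    (hρ4 : ρ ≤ 4) (hr : 0 < r) (hrρ : r ≤ ρ / 4) (hsub : closedBall x (ρ / 4) ⊆ Ω) :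
    meanOsc (cutoffZeroExt Ω θ ρ v) x r
      ≤ (2 + L * 2 ^ n) * bmoSemi v Ω ⊤ + L * (4 ^ n / unitBallVol n * (l1ul v Ω / ρ ^ n)) := by
  set S := bmoSemi v Ω ⊤
  set M := l1ul v Ω
  set R := ρ / 4
  have hκ := unitBallVol_pos (n := n)
  have hR : 0 < R := by positivity
  have hsubr : closedBall x r ⊆ Ω := (closedBall_subset_closedBall hrρ).trans hsub
  have hosc : ∀ t, 0 < t → t ≤ R → meanOsc v x t ≤ S := fun t ht htR =>
    hv.1.meanOsc_le_bmoSemi ht ((closedBall_subset_closedBall htR).trans hsub)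
  have hS : 0 ≤ S := bmoSemi_nonneg v Ω ⊤
  have hmul := meanOsc_le_of_eqOn_mul (f := cutoffZeroExt Ω θ ρ v)
    (φ := fun y => 1 - θ (infDist y (frontier Ω) / ρ)) hr
    ((locallyIntegrable_cutoffZeroExt hθ hΩ hv.2).integrableOn_isCompact
      (isCompact_closedBall _ _))
    (hv.1.1 x r hsubr) (fun y hy => by simp [cutoffZeroExt, hsubr hy])
    (fun y _ => hθ.abs_one_sub_le _)
    (fun y hy => (abs_cutoff_sub_le hL hρ y).trans
      (mul_le_mul_of_nonneg_left hy (by positivity)))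
  have hdyadic := mul_abs_ballAvg_le (hv.1.1 x R hsub) hosc hr hrρ
  have hAR : |ballAvg v x R| ≤ 4 ^ n / unitBallVol n * (M / ρ ^ n) := by
    refine (abs_ballAvg_le_integral_div hR).trans ?_
    have hI : ∫ y in closedBall x R, |v y| ≤ M :=
      (setIntegral_mono_set (hv.2.1 x).abs (.of_forall fun _ => abs_nonneg _)
        (subset_inter (closedBall_subset_closedBall (show ρ / 4 ≤ 1 by linarith))
          hsub).eventuallyLE).trans (hv.2.integral_le_l1ul x)
    calc (∫ y in closedBall x R, |v y|) / (R ^ n * unitBallVol n)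
        ≤ M / (R ^ n * unitBallVol n) := by gcongr
      _ = 4 ^ n / unitBallVol n * (M / ρ ^ n) := by simp only [R, div_pow]; field_simp
  have hL0 : (0 : ℝ) ≤ L := L.2
  calc meanOsc (cutoffZeroExt Ω θ ρ v) x r
      ≤ 2 * (S + L / ρ * (r * |ballAvg v x r|)) := by
        have := hosc r hr hrρ
        nlinarith
    _ ≤ 2 * (S + L / ρ * (2 ^ n * R * S + R * (4 ^ n / unitBallVol n * (M / ρ ^ n)))) := by
        gcongr
        exact hdyadic.trans (by gcongr)
    _ = (2 + L * 2 ^ n / 2) * S + L / 2 * (4 ^ n / unitBallVol n * (M / ρ ^ n)) := by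
        simp only [R]; field_simp; ring
    _ ≤ (2 + L * 2 ^ n) * S + L * (4 ^ n / unitBallVol n * (M / ρ ^ n)) := by
        have : 0 ≤ 4 ^ n / unitBallVol n * (M / ρ ^ n) :=
          by have := l1ul_nonneg v Ω; positivity
        gcongr <;> linarith [show (0 : ℝ) ≤ L * 2 ^ n by positivity]

theorem meanOsc_cutoffZeroExt_eq_zero_of_not_subset (hθ : IsCutoff θ) (hρ : 0 < ρ)
    (hrρ : r ≤ ρ / 4) (hsub : ¬closedBall x (ρ / 4) ⊆ Ω) :
    meanOsc (cutoffZeroExt Ω θ ρ v) x r = 0 := by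
  obtain ⟨y, hy, hyΩ⟩ := not_subset.1 hsub
  refine meanOsc_eq_zero_of_eqOn_zero fun z hz => ?_
  by_cases hzΩ : z ∈ Ω
  · refine cutoffZeroExt_eq_zero_of_infDist_le hθ hρ ?_
    rw [mem_closedBall] at hy hz
    linarith [infDist_frontier_le_dist hzΩ hyΩ, dist_triangle z x y, dist_comm x y]
  · simp [cutoffZeroExt, hzΩ]

theorem meanOsc_cutoffZeroExt_le_of_large_radius (hθ : IsCutoff θ) (hΩ : MeasurableSet Ω)
    (hv : MemL1ul v Ω) (hρ : 0 < ρ) (hρ1 : ρ ≤ 1) (hrρ : ρ / 4 < r) :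
    meanOsc (cutoffZeroExt Ω θ ρ v) x r ≤ 2 * 5 ^ n / unitBallVol n * (l1ul v Ω / ρ ^ n) := by
  set f := cutoffZeroExt Ω θ ρ v
  have hr : 0 < r := by linarith
  have hκ := unitBallVol_pos (n := n)
  have hM := l1ul_nonneg v Ω
  have hI : ∫ y in closedBall x r, |f y| ≤ (r + 1) ^ n * l1ul v Ω :=
    integral_abs_closedBall_le (integrableOn_cutoffZeroExt hθ hΩ hv)
      (integral_abs_cutoffZeroExt_le hθ hΩ hv) x hr.le
  have hbase : (r + 1) / r ≤ 5 / ρ := by rw [div_le_div_iff₀ hr hρ]; nlinarith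
  calc meanOsc f x r ≤ 2 * ⨍ y in closedBall x r, |f y - 0| :=
        meanOsc_le_two_mul hr ((locallyIntegrable_cutoffZeroExt hθ hΩ hv).integrableOn_isCompact
          (isCompact_closedBall x r)) 0
    _ = 2 * ((∫ y in closedBall x r, |f y|) / (r ^ n * unitBallVol n)) := by
        simp only [sub_zero, setAverage_eq, smul_eq_mul, volume_real_closedBall x hr.le,
          inv_mul_eq_div]
    _ ≤ 2 * ((r + 1) ^ n * l1ul v Ω / (r ^ n * unitBallVol n)) := by gcongr
    _ = 2 / unitBallVol n * ((r + 1) / r) ^ n * l1ul v Ω := by rw [div_pow]; field_simp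
    _ ≤ 2 / unitBallVol n * (5 / ρ) ^ n * l1ul v Ω := by gcongr
    _ = 2 * 5 ^ n / unitBallVol n * (l1ul v Ω / ρ ^ n) := by rw [div_pow]; ring

theorem meanOsc_cutoffZeroExt_le (hθ : IsCutoff θ) {L : ℝ≥0} (hL : LipschitzWith L θ)
    (hΩ : MeasurableSet Ω) (hv : MemBmo v Ω) (hρ : 0 < ρ) (hρ1 : ρ ≤ 1) (hr : 0 < r) :
    meanOsc (cutoffZeroExt Ω θ ρ v) x r
      ≤ (2 + L * 2 ^ n + (L * 4 ^ n + 2 * 5 ^ n) / unitBallVol n) / ρ ^ n * bmoNorm v Ω := by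
  set C := 2 + L * 2 ^ n + (L * 4 ^ n + 2 * 5 ^ n) / unitBallVol n
  have hκ := unitBallVol_pos (n := n)
  have hρn : 0 < ρ ^ n := by positivity
  have hS0 := bmoSemi_nonneg v Ω ⊤
  have hS : bmoSemi v Ω ⊤ ≤ bmoSemi v Ω ⊤ / ρ ^ n :=
    le_div_self hS0 hρn (pow_le_one₀ hρ.le hρ1)
  have hM := l1ul_nonneg v Ω
  have key : ∀ a b, a ≤ C → b ≤ C →
      a * bmoSemi v Ω ⊤ + b * (l1ul v Ω / ρ ^ n) ≤ C / ρ ^ n * bmoNorm v Ω :=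
    fun a b haC hbC => calc a * bmoSemi v Ω ⊤ + b * (l1ul v Ω / ρ ^ n)
        ≤ C * (bmoSemi v Ω ⊤ / ρ ^ n) + C * (l1ul v Ω / ρ ^ n) := by gcongr
      _ = C / ρ ^ n * bmoNorm v Ω := by rw [bmoNorm]; ring
  rcases le_or_gt r (ρ / 4) with hrρ | hrρ
  · by_cases hsub : closedBall x (ρ / 4) ⊆ Ω
    · have hLC : L * 4 ^ n / unitBallVol n ≤ C :=
        (div_le_div_of_nonneg_right (le_add_of_nonneg_right (by positivity)) hκ.le).trans
          (le_add_of_nonneg_left (by positivity))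
      calc meanOsc (cutoffZeroExt Ω θ ρ v) x r
          ≤ (2 + L * 2 ^ n) * bmoSemi v Ω ⊤
            + L * (4 ^ n / unitBallVol n * (l1ul v Ω / ρ ^ n)) :=
            meanOsc_cutoffZeroExt_le_of_closedBall_subset hθ hL hΩ hv hρ (by linarith) hr hrρ hsub
        _ = (2 + L * 2 ^ n) * bmoSemi v Ω ⊤
            + L * 4 ^ n / unitBallVol n * (l1ul v Ω / ρ ^ n) := by ring
        _ ≤ C / ρ ^ n * bmoNorm v Ω := key _ _ (le_add_of_nonneg_right (by positivity)) hLC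
    · rw [meanOsc_cutoffZeroExt_eq_zero_of_not_subset hθ hρ hrρ hsub]
      exact mul_nonneg (by positivity) (bmoNorm_nonneg v Ω)
  · refine (meanOsc_cutoffZeroExt_le_of_large_radius hθ hΩ hv.2 hρ hρ1 hrρ).trans ?_
    simpa using key 0 _ (by positivity) ((div_le_div_of_nonneg_right
      (le_add_of_nonneg_left (by positivity)) hκ.le).trans (le_add_of_nonneg_left (by positivity)))

end Oscillation

theorem zero_extension_bmo_general
    (n : ℕ) (Ω : Set (Euc n)) (D : UnifC2Data n Ω)
    (θ : ℝ → ℝ) (hθ : IsCutoff θ) :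
    ∃ ρbar : ℝ, 0 < ρbar ∧ ∃ C : ℝ, 0 < C ∧
      ∀ ρ : ℝ, 0 < ρ → ρ < ρbar →
        ∀ v : Euc n → ℝ, MemBmo v Ω →
          MemBmo (fun x => if x ∈ Ω then (1 - θ (sdist Ω x / ρ)) * v x else 0)
            (Set.univ : Set (Euc n)) ∧
          bmoNorm (fun x => if x ∈ Ω then (1 - θ (sdist Ω x / ρ)) * v x else 0) Set.univ
            ≤ C / ρ ^ n * bmoNorm v Ω := by
  obtain ⟨L, hL⟩ := hθ.exists_lipschitzWith
  have hΩ : MeasurableSet Ω := D.isOpen.measurableSet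
  have hκ := unitBallVol_pos (n := n)
  set C := 2 + L * 2 ^ n + (L * 4 ^ n + 2 * 5 ^ n) / unitBallVol n
  refine ⟨1, one_pos, C + 1, by positivity, fun ρ hρ hρ1 v hv => ?_⟩
  rw [← cutoffZeroExt_eq_ite]
  obtain ⟨hmem, hnorm⟩ := memBmo_univ_and_bmoNorm_le (integrableOn_cutoffZeroExt hθ hΩ hv.2)
    (fun x r hr => meanOsc_cutoffZeroExt_le hθ hL hΩ hv hρ hρ1.le hr)
    (integral_abs_cutoffZeroExt_le hθ hΩ hv.2)
  have hl1ul : l1ul v Ω ≤ bmoNorm v Ω / ρ ^ n :=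
    (le_add_of_nonneg_left (bmoSemi_nonneg v Ω ⊤)).trans
      (le_div_self (bmoNorm_nonneg v Ω) (by positivity) (pow_le_one₀ hρ.le hρ1.le))
  refine ⟨hmem, hnorm.trans ?_⟩
  calc C / ρ ^ n * bmoNorm v Ω + l1ul v Ω ≤ C / ρ ^ n * bmoNorm v Ω + bmoNorm v Ω / ρ ^ n := by
        gcongr
    _ = (C + 1) / ρ ^ n * bmoNorm v Ω := by ring

/-- Lemma 4.3: for `ρ` sufficiently small, the zero extension
`v₂^{ze}` of `v₂ = v − θ_ρ v` belongs to `bmo(ℝⁿ)` and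
`‖v₂^{ze}‖_{bmo(ℝⁿ)} ≤ (C/ρⁿ) ‖v‖_{bmo_∞^∞(Ω)}`, with `C` independent of `v` and `ρ`. -/
theorem zero_extension_bmo
    (n : ℕ) (hn : 2 ≤ n) (Ω : Set (Euc n)) (D : UnifC2Data n Ω)
    (θ : ℝ → ℝ) (hθ : IsCutoff θ) :
    ∃ ρbar : ℝ, 0 < ρbar ∧ ∃ C : ℝ, 0 < C ∧
      ∀ ρ : ℝ, 0 < ρ → ρ < ρbar →
        ∀ v : Euc n → ℝ, MemBmo v Ω →
          MemBmo (fun x => if x ∈ Ω then (1 - θ (sdist Ω x / ρ)) * v x else 0)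
            (Set.univ : Set (Euc n)) ∧
          bmoNorm (fun x => if x ∈ Ω then (1 - θ (sdist Ω x / ρ)) * v x else 0) Set.univ
            ≤ C / ρ ^ n * bmoNorm v Ω :=
  zero_extension_bmo_general n Ω D θ hθ
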